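/- In one coupled step of the path coupling, if X'_v ≠ Y'_v for some node v ∈ S with v ≠ v₀, then there exists a flip path (v₀, v₁, …, v_ℓ = v) of length ℓ ≥ 1 in G, and moreover the proposals of v are the opposite of the last red/blue colors seen on this path in the respective chains: c^X_v = c_Y and c^Y_v = c_X, where (c_X, c_Y) = (c^X_{v_{ℓ−1}}, c^Y_{v_{ℓ−1}}) if ℓ > 1, and (c_X, c_Y) = (r, b) if ℓ = 1. -/

import Mathlib

open Finset

attribute [local instance] Classical.propDecidable

namespace LGCoupling

/-- Data of the path coupling of the Local Glauber dynamics: a graph `G`, `q` colors,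
the two special colors `r ≠ b`, the distinguished node `v₀`, and two colorings `X, Y`
agreeing everywhere except at `v₀`, where `X v₀ = r` and `Y v₀ = b`. -/
structure Setup (V : Type*) where
  G : SimpleGraph V
  q : ℕ
  r : Fin q
  b : Fin q
  v0 : V
  X : V → Fin q
  Y : V → Fin q

/-- The assumptions on the pair of colorings in the path coupling. -/
def Setup.Valid {V : Type*} (s : Setup V) : Prop :=
  s.r ≠ s.b ∧ s.X s.v0 = s.r ∧ s.Y s.v0 = s.b ∧ ∀ v : V, v ≠ s.v0 → s.X v = s.Y v

variable {V : Type*} [Fintype V] [DecidableEq V]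

/-- The neighborhood `N(v)` of `v` as a finset. -/
noncomputable def nbrs (G : SimpleGraph V) (v : V) : Finset V :=
  univ.filter (fun w => G.Adj v w)

/-- The acceptance condition of the Local Glauber rule at node `v`, for current coloring `σ`
and proposals `c`: `c v ∉ ⋃_{u ∈ N(v)} {σ u, c u}` and `c u ∉ {σ v, c v}` for all `u ∈ N(v)`. -/
def Accept (G : SimpleGraph V) {q : ℕ} (σ c : V → Fin q) (v : V) : Prop :=
  ∀ u : V, G.Adj v u → c v ≠ σ u ∧ c v ≠ c u ∧ c u ≠ σ v ∧ c u ≠ c v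

/-- One step of the Local Glauber rule, given proposals `c`. -/
noncomputable def stepFn (G : SimpleGraph V) {q : ℕ} (σ c : V → Fin q) : V → Fin q :=
  fun v => if Accept G σ c v then c v else σ v

/-- `B = {v ≠ v₀ : X v ∈ {r, b}}`. -/
noncomputable def Bset (s : Setup V) : Finset V :=
  univ.filter (fun v => v ≠ s.v0 ∧ (s.X v = s.r ∨ s.X v = s.b))

/-- `K = (⋃_{v ∈ B} N⁺(v)) \ {v₀}`. -/
noncomputable def Kset (s : Setup V) : Finset V :=
  ((Bset s).biUnion (fun v => insert v (nbrs s.G v))).erase s.v0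

/-- `S`: the marked nodes outside `K`. -/
noncomputable def Sset (s : Setup V) (m : V → Bool) : Finset V :=
  univ.filter (fun v => m v = true ∧ v ∉ Kset s)

/-- Auxiliary breadth-first layering: `(layersAux s m u d).1 = M^d` and
`(layersAux s m u d).2 = ⋃_{i ≤ d} M^i`.  Here `M⁰ = F⁰ = {v₀}`,
`F^d = {v ∈ M^d : u v ∈ {r,b}}` for `d ≥ 1` (a node of `M^d`, `d ≥ 1`, samples mirroredly,
so it has flipped proposals exactly when its uniform draw `u v` is red or blue), and
`M^{d+1} = (N(F^d) ∩ S) \ ⋃_{i ≤ d} M^i`. -/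
noncomputable def layersAux (s : Setup V) (m : V → Bool) (u : V → Fin s.q) :
    ℕ → Finset V × Finset V
  | 0 => ({s.v0}, {s.v0})
  | d + 1 =>
      let prev := layersAux s m u d
      let F : Finset V :=
        if d = 0 then {s.v0} else prev.1.filter (fun v => u v = s.r ∨ u v = s.b)
      let Mnext : Finset V := ((F.biUnion (fun w => nbrs s.G w)) ∩ Sset s m) \ prev.2
      (Mnext, prev.2 ∪ Mnext)

/-- The breadth-first layer `M^d`. -/
noncomputable def layerM (s : Setup V) (m : V → Bool) (u : V → Fin s.q) (d : ℕ) : Finset V :=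
  (layersAux s m u d).1

/-- The set `F^d ⊆ M^d` of nodes with flipped proposals (`F⁰ = {v₀}`). -/
noncomputable def layerF (s : Setup V) (m : V → Bool) (u : V → Fin s.q) (d : ℕ) : Finset V :=
  if d = 0 then {s.v0} else (layerM s m u d).filter (fun v => u v = s.r ∨ u v = s.b)

/-- A node samples its proposals mirroredly iff it lies in a layer `M^d` with `d ≥ 1`. -/
def Mirrored (s : Setup V) (m : V → Bool) (u : V → Fin s.q) (v : V) : Prop :=
  ∃ d : ℕ, 1 ≤ d ∧ v ∈ layerM s m u d

/-- Exchange red and blue, leaving all other colors fixed. -/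
noncomputable def flipRB (s : Setup V) (c : Fin s.q) : Fin s.q :=
  if c = s.r then s.b else if c = s.b then s.r else c

/-- Proposal of node `v` in chain `X`: its uniform draw `u v` if marked
(both consistent and mirrored sampling propose the draw itself in chain `X`),
and its current color otherwise. -/
noncomputable def cX (s : Setup V) (m : V → Bool) (u : V → Fin s.q) : V → Fin s.q :=
  fun v => if m v then u v else s.X v

/-- Proposal of node `v` in chain `Y`: for a marked node, the draw `u v`, with red and blue
exchanged when `v` samples mirroredly; the current color if unmarked. -/
noncomputable def cY (s : Setup V) (m : V → Bool) (u : V → Fin s.q) : V → Fin s.q :=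
  fun v => if m v then (if Mirrored s m u v then flipRB s (u v) else u v) else s.Y v

/-- The coloring `X'` after one coupled step. -/
noncomputable def X' (s : Setup V) (m : V → Bool) (u : V → Fin s.q) : V → Fin s.q :=
  stepFn s.G s.X (cX s m u)

/-- The coloring `Y'` after one coupled step. -/
noncomputable def Y' (s : Setup V) (m : V → Bool) (u : V → Fin s.q) : V → Fin s.q :=
  stepFn s.G s.Y (cY s m u)

/-- Probability weight of the randomness `(m, u)` of one coupled step: each node is marked
independently with probability `γ`, and each node makes one independent uniform draw in `[q]`. -/
noncomputable def weight (γ : ℝ) (s : Setup V) (m : V → Bool) : ℝ :=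
  (∏ v : V, (if m v then γ else 1 - γ)) * ((1 : ℝ) / s.q) ^ (Fintype.card V)

end LGCoupling

/-!
Let `v ∈ S`, `v ≠ v₀`, end up with different colors in the two chains. If its two proposals
agreed, the Local Glauber rule would decide identically at `v` in both chains: its current
colors agree and avoid red and blue (as `v ∉ K`), and each neighbor shows either the same
colors in both chains or red/blue colors in both; the latter happens only next to `v₀` or a
flipped node, which makes `v` mirrored, so that its agreeing proposal avoids red and blue too.
Hence `v` has flipped proposals, so it lies in some layer `F^ℓ`, and the breadth-first
construction of the layers traces a flip path back to `v₀`. Finally, the last node before `v`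
shows some red/blue color `a` in chain `X` and the other one in chain `Y`; if `v` proposed `a`
in chain `X` it would propose the other color in chain `Y`, both chains would reject, and `v`
would keep equal colors. So `v` proposes the colors opposite to those of its predecessor.
-/

namespace LGCoupling

variable {V : Type*}

theorem ne_iff_ne_of_eq_or_mem {α : Type*} {T : Set α} {a x y : α} (ha : a ∉ T)
    (h : x = y ∨ x ∈ T ∧ y ∈ T) : a ≠ x ↔ a ≠ y := by
  rcases h with rfl | ⟨hx, hy⟩
  · rfl
  · exact ⟨fun _ h => ha (h ▸ hy), fun _ h => ha (h ▸ hx)⟩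

theorem stepFn_eq_of_eq_or_mem {G : SimpleGraph V} {q : ℕ} {σ c σ' c' : V → Fin q} {v : V}
    (T : Set (Fin q)) (hσ : σ v = σ' v) (hc : c v = c' v) (hσT : σ v ∉ T) (hcT : c v ∉ T)
    (hnbr : ∀ w, G.Adj v w →
      (σ w = σ' w ∨ σ w ∈ T ∧ σ' w ∈ T) ∧ (c w = c' w ∨ c w ∈ T ∧ c' w ∈ T)) :
    stepFn G σ c v = stepFn G σ' c' v := by
  have hacc : Accept G σ c v ↔ Accept G σ' c' v := by
    refine forall₂_congr fun w hw => ?_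
    obtain ⟨hσw, hcw⟩ := hnbr w hw
    rw [ne_comm (a := c w), ne_comm (a := c w), ne_comm (a := c' w), ne_comm (a := c' w),
      ne_iff_ne_of_eq_or_mem hcT hσw, ne_iff_ne_of_eq_or_mem hcT hcw,
      ne_iff_ne_of_eq_or_mem hσT hcw, hσ, hc]
  simp only [stepFn, hacc, hσ, hc]

theorem stepFn_eq_self_of_adj {G : SimpleGraph V} {q : ℕ} {σ c : V → Fin q} {v w : V}
    (hadj : G.Adj v w) (hblock : c v = σ w ∨ c v = c w) : stepFn G σ c v = σ v := by
  refine if_neg fun hacc => ?_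
  obtain ⟨h₁, h₂, -, -⟩ := hacc w hadj
  exact hblock.elim h₁ h₂

section flipRB

variable (s : Setup V)

@[simp] theorem flipRB_r : flipRB s s.r = s.b := by simp [flipRB]

@[simp] theorem flipRB_b : flipRB s s.b = s.r := by unfold flipRB; split_ifs <;> simp_all

@[simp] theorem flipRB_flipRB (c : Fin s.q) : flipRB s (flipRB s c) = c := by
  unfold flipRB; split_ifs <;> simp_all

theorem flipRB_eq_self {c : Fin s.q} (h : c ∉ ({s.r, s.b} : Set (Fin s.q))) :
    flipRB s c = c := by
  simp only [Set.mem_insert_iff, Set.mem_singleton_iff, not_or] at h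
  simp [flipRB, h.1, h.2]

theorem flipRB_mem_rb {c : Fin s.q} (h : c ∈ ({s.r, s.b} : Set (Fin s.q))) :
    flipRB s c ∈ ({s.r, s.b} : Set (Fin s.q)) := by
  rcases h with rfl | rfl <;> simp

theorem notMem_rb_of_flipRB_eq (hrb : s.r ≠ s.b) {c : Fin s.q} (h : flipRB s c = c) :
    c ∉ ({s.r, s.b} : Set (Fin s.q)) := by
  rintro (rfl | rfl)
  · exact hrb (by simpa using h.symm)
  · exact hrb (by simpa using h)

theorem eq_or_eq_flipRB_of_mem_rb {a c : Fin s.q} (ha : a ∈ ({s.r, s.b} : Set (Fin s.q)))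
    (hc : c ∈ ({s.r, s.b} : Set (Fin s.q))) : c = a ∨ c = flipRB s a := by
  rcases ha with rfl | rfl <;> rcases hc with rfl | rfl <;> simp

end flipRB

theorem X_eq_Y_or_rb {s : Setup V} (hs : s.Valid) (w : V) :
    s.X w = s.Y w ∨
      s.X w ∈ ({s.r, s.b} : Set (Fin s.q)) ∧ s.Y w ∈ ({s.r, s.b} : Set (Fin s.q)) := by
  obtain ⟨-, hXr, hYb, hXY⟩ := hs
  by_cases hw0 : w = s.v0
  · subst hw0; simp [hXr, hYb]
  · exact Or.inl (hXY w hw0)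

section coupling

variable [Fintype V] [DecidableEq V] {s : Setup V} {m : V → Bool} {u : V → Fin s.q}

theorem X_notMem_rb_of_mem_Sset {v : V} (hvS : v ∈ Sset s m) (hv0 : v ≠ s.v0) :
    s.X v ∉ ({s.r, s.b} : Set (Fin s.q)) := fun hrb => by
  refine (Finset.mem_filter.1 hvS).2.2
    (Finset.mem_erase.2 ⟨hv0, Finset.mem_biUnion.2 ⟨v, ?_, ?_⟩⟩)
  · simpa [Bset, hv0] using hrb
  · exact Finset.mem_insert_self _ _

theorem cX_eq_cY_or_rb (hs : s.Valid) (w : V) :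
    cX s m u w = cY s m u w ∨
      cX s m u w ∈ ({s.r, s.b} : Set (Fin s.q)) ∧
        cY s m u w ∈ ({s.r, s.b} : Set (Fin s.q)) := by
  unfold cX cY
  split_ifs with hm hmir
  · by_cases hrb : u w ∈ ({s.r, s.b} : Set (Fin s.q))
    · exact Or.inr ⟨hrb, flipRB_mem_rb s hrb⟩
    · exact Or.inl (flipRB_eq_self s hrb).symm
  · exact Or.inl rfl
  · exact X_eq_Y_or_rb hs w

theorem layerM_succ (d : ℕ) :
    layerM s m u (d + 1) =
      ((layerF s m u d).biUnion (nbrs s.G) ∩ Sset s m) \ (layersAux s m u d).2 := by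
  by_cases hd : d = 0 <;> simp [layerM, layersAux, layerF, hd]

theorem exists_layerM_of_mem_layersAux_snd {d : ℕ} {w : V} (hw : w ∈ (layersAux s m u d).2) :
    ∃ i ≤ d, w ∈ layerM s m u i := by
  induction d with
  | zero => exact ⟨0, le_rfl, hw⟩
  | succ d ih =>
    rcases Finset.mem_union.1 hw with hw | hw
    · obtain ⟨i, hi, hwi⟩ := ih hw
      exact ⟨i, hi.trans d.le_succ, hwi⟩
    · exact ⟨d + 1, le_rfl, hw⟩

theorem mem_layerF_iff {d : ℕ} (hd : 1 ≤ d) {w : V} :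
    w ∈ layerF s m u d ↔ w ∈ layerM s m u d ∧ u w ∈ ({s.r, s.b} : Set (Fin s.q)) := by
  rw [layerF, if_neg (by omega), Finset.mem_filter]
  rfl

theorem layerM_subset_Sset {d : ℕ} (hd : 1 ≤ d) : layerM s m u d ⊆ Sset s m := by
  obtain ⟨e, rfl⟩ : ∃ e, d = e + 1 := ⟨d - 1, by omega⟩
  rw [layerM_succ]
  exact fun w hw => (Finset.mem_inter.1 (Finset.mem_sdiff.1 hw).1).2

theorem exists_adj_mem_layerF_of_mem_layerM_succ {d : ℕ} {v : V}
    (hv : v ∈ layerM s m u (d + 1)) : ∃ w ∈ layerF s m u d, s.G.Adj w v := by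
  rw [layerM_succ] at hv
  simpa [nbrs] using (Finset.mem_inter.1 (Finset.mem_sdiff.1 hv).1).1

theorem mirrored_of_adj_mem_layerF {d : ℕ} {w v : V} (hw : w ∈ layerF s m u d)
    (hvS : v ∈ Sset s m) (hv0 : v ≠ s.v0) (hadj : s.G.Adj w v) : Mirrored s m u v := by
  by_cases hv : v ∈ (layersAux s m u d).2
  · obtain ⟨i, -, hvi⟩ := exists_layerM_of_mem_layersAux_snd hv
    refine ⟨i, Nat.one_le_iff_ne_zero.2 fun hi => hv0 ?_, hvi⟩
    subst hi
    exact Finset.mem_singleton.1 hvi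
  · refine ⟨d + 1, d.succ_pos, ?_⟩
    rw [layerM_succ]
    exact Finset.mem_sdiff.2 ⟨Finset.mem_inter.2
      ⟨Finset.mem_biUnion.2 ⟨w, hw, by simpa [nbrs] using hadj⟩, hvS⟩, hv⟩

theorem exists_mem_layerF_of_cX_ne_cY (hs : s.Valid) {w : V} (hw0 : w ≠ s.v0)
    (hne : cX s m u w ≠ cY s m u w) : ∃ d, 1 ≤ d ∧ w ∈ layerF s m u d := by
  unfold cX cY at hne
  split_ifs at hne with hm hmir
  · obtain ⟨d, hd, hwM⟩ := hmir
    exact ⟨d, hd, (mem_layerF_iff hd).2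
      ⟨hwM, not_not.1 fun hrb => hne (flipRB_eq_self s hrb).symm⟩⟩
  · exact absurd rfl hne
  · exact absurd (hs.2.2.2 w hw0) hne

theorem cX_mem_rb_and_cY_eq_flipRB_of_mem_layerF {d : ℕ} (hd : 1 ≤ d) {w : V}
    (hw : w ∈ layerF s m u d) :
    cX s m u w ∈ ({s.r, s.b} : Set (Fin s.q)) ∧ cY s m u w = flipRB s (cX s m u w) := by
  obtain ⟨hwM, hrb⟩ := (mem_layerF_iff hd).1 hw
  obtain ⟨-, hm⟩ := Finset.mem_filter.1 (layerM_subset_Sset hd hwM)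
  have hmir : Mirrored s m u w := ⟨d, hd, hwM⟩
  simpa [cX, cY, hm.1, hmir] using hrb

theorem X_eq_Y_and_cX_eq_cY_of_adj_of_not_mirrored (hs : s.Valid) {v w : V}
    (hvS : v ∈ Sset s m) (hv0 : v ≠ s.v0) (hmir : ¬ Mirrored s m u v) (hadj : s.G.Adj v w) :
    s.X w = s.Y w ∧ cX s m u w = cY s m u w := by
  have hw0 : w ≠ s.v0 := by
    rintro rfl
    exact hmir (mirrored_of_adj_mem_layerF (d := 0) (by simp [layerF]) hvS hv0 hadj.symm)
  refine ⟨hs.2.2.2 w hw0, not_not.1 fun hne => ?_⟩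
  obtain ⟨d, -, hwF⟩ := exists_mem_layerF_of_cX_ne_cY hs hw0 hne
  exact hmir (mirrored_of_adj_mem_layerF hwF hvS hv0 hadj.symm)

theorem cX_ne_cY_of_X'_ne_Y' (hs : s.Valid) {v : V} (hvS : v ∈ Sset s m) (hv0 : v ≠ s.v0)
    (hdiff : X' s m u v ≠ Y' s m u v) : cX s m u v ≠ cY s m u v := by
  intro hc
  apply hdiff
  have hXY := hs.2.2.2 v hv0
  by_cases hmir : Mirrored s m u v
  · have hcv : cX s m u v ∉ ({s.r, s.b} : Set (Fin s.q)) := by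
      have hm := (Finset.mem_filter.1 hvS).2.1
      simp only [cX, cY, hm, hmir, if_true] at hc ⊢
      exact notMem_rb_of_flipRB_eq s hs.1 hc.symm
    exact stepFn_eq_of_eq_or_mem _ hXY hc (X_notMem_rb_of_mem_Sset hvS hv0) hcv
      fun w _ => ⟨X_eq_Y_or_rb hs w, cX_eq_cY_or_rb hs w⟩
  · refine stepFn_eq_of_eq_or_mem ∅ hXY hc (Set.notMem_empty _) (Set.notMem_empty _)
      fun w hadj => ?_
    obtain ⟨hXYw, hcw⟩ := X_eq_Y_and_cX_eq_cY_of_adj_of_not_mirrored hs hvS hv0 hmir hadj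
    exact ⟨Or.inl hXYw, Or.inl hcw⟩

theorem exists_flip_path (s : Setup V) (m : V → Bool) (u : V → Fin s.q) :
    ∀ (ℓ : ℕ) (v : V), v ∈ layerF s m u ℓ →
      ∃ p : ℕ → V, p 0 = s.v0 ∧ p ℓ = v ∧
      (∀ i < ℓ, s.G.Adj (p i) (p (i + 1))) ∧ ∀ i ≤ ℓ, p i ∈ layerF s m u i
  | 0, v, hv => by
    have hv : v = s.v0 := by simpa [layerF] using hv
    refine ⟨fun _ => s.v0, rfl, hv.symm, fun i hi => absurd hi i.not_lt_zero, fun i hi => ?_⟩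
    obtain rfl := Nat.le_zero.1 hi
    simp [layerF]
  | ℓ + 1, v, hv => by
    obtain ⟨w, hw, hwv⟩ :=
      exists_adj_mem_layerF_of_mem_layerM_succ ((mem_layerF_iff ℓ.succ_pos).1 hv).1
    obtain ⟨p, hp0, hpℓ, hadj, hpF⟩ := exists_flip_path s m u ℓ w hw
    refine ⟨fun i => if i ≤ ℓ then p i else v, by simp [hp0], by simp, fun i hi => ?_,
      fun i hi => ?_⟩
    · rcases (Nat.lt_succ_iff.1 hi).lt_or_eq with hi | rfl
      · simpa [hi.le, Nat.succ_le_of_lt hi] using hadj i hi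
      · simpa [hpℓ] using hwv
    · rcases hi.lt_or_eq with hi | rfl
      · simpa [Nat.lt_succ_iff.1 hi] using hpF i (Nat.lt_succ_iff.1 hi)
      · simpa using hv

theorem cX_eq_flipRB_of_adj (hs : s.Valid) {d : ℕ} (hd : 1 ≤ d) {v w : V}
    (hvF : v ∈ layerF s m u d) (hv0 : v ≠ s.v0) (hdiff : X' s m u v ≠ Y' s m u v)
    (hadj : s.G.Adj v w) {a : Fin s.q} (ha : a ∈ ({s.r, s.b} : Set (Fin s.q)))
    (hXw : a = s.X w ∨ a = cX s m u w) (hYw : flipRB s a = s.Y w ∨ flipRB s a = cY s m u w) :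
    cX s m u v = flipRB s a ∧ cY s m u v = a := by
  obtain ⟨hvrb, hcY⟩ := cX_mem_rb_and_cY_eq_flipRB_of_mem_layerF hd hvF
  rcases eq_or_eq_flipRB_of_mem_rb s ha hvrb with hcX | hcX
  · refine absurd ?_ hdiff
    rw [X', Y', stepFn_eq_self_of_adj hadj (hcX ▸ hXw),
      stepFn_eq_self_of_adj hadj (by rw [hcY, hcX]; exact hYw), hs.2.2.2 v hv0]
  · rw [hcY, hcX, flipRB_flipRB]
    exact ⟨rfl, rfl⟩

end coupling

end LGCoupling

open LGCoupling in
/-- if `X' v ≠ Y' v` for some `v ∈ S`, `v ≠ v₀`, then there is a flip path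
`(v₀, …, v_ℓ = v)` of length `ℓ ≥ 1` in `G` (i.e. `v_i ∈ F^i` for `1 ≤ i ≤ ℓ`), and `v`'s
proposals are flipped and opposite to the last red/blue colors seen on the path:
`c^X_v = c_Y ≠ c^Y_v = c_X`, where `(c_X, c_Y) = (c^X_{v_{ℓ−1}}, c^Y_{v_{ℓ−1}})` if `ℓ > 1`
and `(c_X, c_Y) = (r, b)` if `ℓ = 1`. -/
theorem flip_path_of_diff_in_S {V : Type*} [Fintype V] [DecidableEq V]
    (s : Setup V) (hs : s.Valid) (m : V → Bool) (u : V → Fin s.q)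
    (v : V) (hvS : v ∈ Sset s m) (hv0 : v ≠ s.v0)
    (hdiff : X' s m u v ≠ Y' s m u v) :
    ∃ ℓ : ℕ, 1 ≤ ℓ ∧ ∃ p : ℕ → V,
      p 0 = s.v0 ∧ p ℓ = v ∧
      (∀ i : ℕ, i < ℓ → s.G.Adj (p i) (p (i + 1))) ∧
      (∀ i : ℕ, 1 ≤ i → i ≤ ℓ → p i ∈ layerF s m u i) ∧
      cX s m u v ≠ cY s m u v ∧
      cX s m u v = (if ℓ = 1 then s.b else cY s m u (p (ℓ - 1))) ∧
      cY s m u v = (if ℓ = 1 then s.r else cX s m u (p (ℓ - 1))) := by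
  have hne := cX_ne_cY_of_X'_ne_Y' hs hvS hv0 hdiff
  obtain ⟨ℓ, hℓ, hvF⟩ := exists_mem_layerF_of_cX_ne_cY hs hv0 hne
  obtain ⟨p, hp0, hpℓ, hadj, hpF⟩ := exists_flip_path s m u ℓ v hvF
  have hlast : s.G.Adj v (p (ℓ - 1)) := by
    simpa [Nat.sub_add_cancel hℓ, hpℓ] using (hadj (ℓ - 1) (by omega)).symm
  refine ⟨ℓ, hℓ, p, hp0, hpℓ, hadj, fun i _ hi => hpF i hi, hne, ?_⟩
  rcases hℓ.eq_or_lt with rfl | hℓ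
  · rw [Nat.sub_self, hp0] at hlast
    simpa using cX_eq_flipRB_of_adj hs le_rfl hvF hv0 hdiff hlast (Or.inl rfl)
      (Or.inl hs.2.1.symm) (Or.inl (by simp [hs.2.2.1]))
  · have hw := cX_mem_rb_and_cY_eq_flipRB_of_mem_layerF (by omega) (hpF (ℓ - 1) (by omega))
    rw [if_neg hℓ.ne', if_neg hℓ.ne', hw.2]
    exact cX_eq_flipRB_of_adj hs hℓ.le hvF hv0 hdiff hlast hw.1 (Or.inr rfl) (Or.inr hw.2.symm)
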